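/- (IRLS descent step for W.) Let E be a real n × d matrix, Z and Rᵀ real n × c matrices, and α > 0. Let W and W' be real d × c matrices such that every row of W is nonzero, and let D be the d × d diagonal matrix with diagonal entries D(j,j) = 1 / (2‖W(j,:)‖₂). If the reweighted quadratic objective satisfies ‖E W' − Z − Rᵀ‖_F² + α Σ_j ‖W'(j,:)‖₂² / (2‖W(j,:)‖₂) ≤ ‖E W − Z − Rᵀ‖_F² + α Σ_j ‖W(j,:)‖₂² / (2‖W(j,:)‖₂), then the original objective satisfies ‖E W' − Z − Rᵀ‖_F² + α ‖W'‖_{2,1} ≤ ‖E W − Z − Rᵀ‖_F² + α ‖W‖_{2,1}. -/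

import Mathlib

/-! By AM-GM, `‖a‖₂ ≤ ‖b‖₂ / 2 + ‖a‖₂² / (2‖b‖₂)` with equality at `a = b`. Summed over the rows,
`α ‖·‖_{2,1}` is majorized by the reweighted quadratic penalty at `W`, with equality at `W` itself,
so a step that decreases the majorizing objective also decreases the original one. -/

noncomputable def rowNorm {m n : ℕ} (M : Matrix (Fin m) (Fin n) ℝ) (j : Fin m) : ℝ :=
  Real.sqrt (∑ k, (M j k) ^ 2)

noncomputable def norm21 {m n : ℕ} (M : Matrix (Fin m) (Fin n) ℝ) : ℝ :=
  ∑ j, rowNorm M j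

noncomputable def frobSq {m n : ℕ} (M : Matrix (Fin m) (Fin n) ℝ) : ℝ :=
  ∑ i, ∑ j, (M i j) ^ 2

lemma sub_sq_div_two_mul_le (a : ℝ) {b : ℝ} (hb : 0 < b) :
    a - a ^ 2 / (2 * b) ≤ b - b ^ 2 / (2 * b) := by
  have hdiff : a - a ^ 2 / (2 * b) - (b - b ^ 2 / (2 * b)) = -((a - b) ^ 2 / (2 * b)) := by
    field_simp
    ring
  have : 0 ≤ (a - b) ^ 2 / (2 * b) := by positivity
  linarith

lemma rowNorm_pos {m n : ℕ} {M : Matrix (Fin m) (Fin n) ℝ} {j : Fin m} (h : M j ≠ 0) :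
    0 < rowNorm M j := by
  obtain ⟨k, hk⟩ := Function.ne_iff.1 h
  exact Real.sqrt_pos.2 <|
    Finset.sum_pos' (fun _ _ => sq_nonneg _) ⟨k, Finset.mem_univ k, sq_pos_of_ne_zero hk⟩

lemma norm21_sub_reweighted_le {m n : ℕ} {W : Matrix (Fin m) (Fin n) ℝ} (hW : ∀ j, W j ≠ 0)
    (W' : Matrix (Fin m) (Fin n) ℝ) :
    norm21 W' - ∑ j, rowNorm W' j ^ 2 / (2 * rowNorm W j) ≤
      norm21 W - ∑ j, rowNorm W j ^ 2 / (2 * rowNorm W j) := by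
  simp only [norm21, ← Finset.sum_sub_distrib]
  exact Finset.sum_le_sum fun j _ => sub_sq_div_two_mul_le _ (rowNorm_pos (hW j))

theorem irls_descent_W_general (n d c : ℕ) (E : Matrix (Fin n) (Fin d) ℝ)
    (Z Rt : Matrix (Fin n) (Fin c) ℝ) (α : ℝ) (hα : 0 < α)
    (W W' : Matrix (Fin d) (Fin c) ℝ) (hW : ∀ j, W j ≠ 0)
    (hstep : frobSq (E * W' - Z - Rt) + α * ∑ j, (rowNorm W' j) ^ 2 / (2 * rowNorm W j) ≤
      frobSq (E * W - Z - Rt) + α * ∑ j, (rowNorm W j) ^ 2 / (2 * rowNorm W j)) :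
    frobSq (E * W' - Z - Rt) + α * norm21 W' ≤ frobSq (E * W - Z - Rt) + α * norm21 W := by
  have hgap := mul_le_mul_of_nonneg_left (norm21_sub_reweighted_le hW W') hα.le
  rw [mul_sub, mul_sub] at hgap
  linarith

/-- IRLS descent step for `W`: if the reweighted quadratic objective (with diagonal
reweighting matrix `D(j,j) = 1/(2‖W(j,:)‖₂)`) does not increase when passing from `W`
to `W'`, then neither does the original ℓ2,1-regularized objective. -/
theorem irls_descent_W (n d c : ℕ) (E : Matrix (Fin n) (Fin d) ℝ)
    (Z Rt : Matrix (Fin n) (Fin c) ℝ) (α : ℝ) (hα : 0 < α)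
    (W W' : Matrix (Fin d) (Fin c) ℝ) (hW : ∀ j, W j ≠ 0)
    (D : Matrix (Fin d) (Fin d) ℝ)
    (hD : D = Matrix.diagonal fun j => 1 / (2 * rowNorm W j))
    (hstep : frobSq (E * W' - Z - Rt) + α * ∑ j, (rowNorm W' j) ^ 2 / (2 * rowNorm W j) ≤
      frobSq (E * W - Z - Rt) + α * ∑ j, (rowNorm W j) ^ 2 / (2 * rowNorm W j)) :
    frobSq (E * W' - Z - Rt) + α * norm21 W' ≤ frobSq (E * W - Z - Rt) + α * norm21 W :=
  irls_descent_W_general n d c E Z Rt α hα W W' hW hstep
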